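/- Let F be a complex Hilbert space, P an orthogonal projection and U a unitary on F, and consider on H²⊗F the commuting pair of isometries V₁ = I⊗P^⊥U + M_z⊗PU and V₂ = I⊗U*P + M_z⊗U*P^⊥. Then V₂*V₁ − V₁V₂* = (I − M_zM_z*) ⊗ PUP^⊥U; consequently (V₁,V₂) is doubly commutative (V₂V₁* = V₁*V₂) if and only if PUP^⊥ = 0. -/

import Mathlib

/-!
On `H² ⊗ F = ℓ²(ℕ, F)` an operator `I ⊗ A + M_z ⊗ B` acts by `(Wf)ₙ = A fₙ + B fₙ₋₁`, and its
adjoint by `(W*f)ₙ = A* fₙ + B* fₙ₊₁`. With these two formulas both `V₂*V₁ − V₁V₂*` and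
`V₂V₁* − V₁*V₂` are computed coordinatewise: every coordinate cancels except the zeroth, which is
`PUP^⊥U f₀` and `−U*P^⊥U*P f₀` respectively. Hence `(V₁, V₂)` doubly commutes iff
`U*P^⊥U*P = 0`, iff `P^⊥U*P = 0` (as `U*` is injective), iff its adjoint `PUP^⊥` vanishes.
-/

open ContinuousLinearMap
open scoped lp

section

variable {𝕜 F : Type*} [RCLike 𝕜] [NormedAddCommGroup F] [InnerProductSpace 𝕜 F]

-- `W = I ⊗ A + M_z ⊗ B` on `H² ⊗ F = ℓ²(ℕ, F)`: the analytic Toeplitz operator of symbol `A + z B`.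
structure HasLinearSymbol (W : ℓ²(ℕ, F) →L[𝕜] ℓ²(ℕ, F)) (A B : F →L[𝕜] F) : Prop where
  apply_zero : ∀ f, (W f : ℕ → F) 0 = A ((f : ℕ → F) 0)
  apply_succ : ∀ f n, (W f : ℕ → F) (n + 1) = A ((f : ℕ → F) (n + 1)) + B ((f : ℕ → F) n)

namespace HasLinearSymbol

variable {W : ℓ²(ℕ, F) →L[𝕜] ℓ²(ℕ, F)} {A B : F →L[𝕜] F}

theorem apply_single (h : HasLinearSymbol W A B) (n : ℕ) (x : F) :
    W (lp.single 2 n x) = lp.single 2 n (A x) + lp.single 2 (n + 1) (B x) := by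
  ext k
  rcases k with _ | k
  · rcases n with _ | n <;> simp [h.apply_zero]
  · rw [h.apply_succ, lp.coeFn_add, Pi.add_apply]
    simp only [lp.single_apply, Pi.single_apply, add_left_inj]
    split_ifs <;> simp_all

theorem adjoint_apply [CompleteSpace F] (h : HasLinearSymbol W A B) (f : ℓ²(ℕ, F)) (n : ℕ) :
    (adjoint W f : ℕ → F) n = adjoint A ((f : ℕ → F) n) + adjoint B ((f : ℕ → F) (n + 1)) := by
  refine ext_inner_left 𝕜 fun x =>
    (lp.inner_single_left (𝕜 := 𝕜) n x (adjoint W f)).symm.trans ?_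
  rw [adjoint_inner_right, h.apply_single, inner_add_left,
    lp.inner_single_left, lp.inner_single_left, inner_add_right, adjoint_inner_right,
    adjoint_inner_right]

end HasLinearSymbol

variable [CompleteSpace F]

theorem comp_eq_zero_iff_of_comp_adjoint_eq_one {U X : F →L[𝕜] F} (hU : U ∘L adjoint U = 1) :
    adjoint U ∘L X = 0 ↔ X = 0 := by
  refine ⟨fun h => ?_, fun h => by rw [h, comp_zero]⟩
  rw [← id_comp X, ← one_def, ← hU, comp_assoc, h, comp_zero]

theorem comp_adjoint_comp_eq_zero_iff {P Q U : F →L[𝕜] F}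
    (hP : IsSelfAdjoint P) (hQ : IsSelfAdjoint Q) :
    Q ∘L adjoint U ∘L P = 0 ↔ P ∘L U ∘L Q = 0 := by
  rw [← (adjoint : (F →L[𝕜] F) ≃ₗᵢ⋆[𝕜] (F →L[𝕜] F)).map_eq_zero_iff, adjoint_comp, adjoint_comp,
    hP.adjoint_eq, hQ.adjoint_eq, adjoint_adjoint, comp_assoc]

-- `(V₁, V₂)` is the Berger–Coburn–Lebow pair of the projection `P` and the unitary `U`.
namespace BCL

variable {P U : F →L[𝕜] F} {V₁ V₂ : ℓ²(ℕ, F) →L[𝕜] ℓ²(ℕ, F)}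

theorem adjoint_snd_apply (hP : IsSelfAdjoint P)
    (h₂ : HasLinearSymbol V₂ (adjoint U ∘L P) (adjoint U ∘L (1 - P))) (f : ℓ²(ℕ, F)) (n : ℕ) :
    (adjoint V₂ f : ℕ → F) n = P (U ((f : ℕ → F) n)) + (1 - P) (U ((f : ℕ → F) (n + 1))) := by
  simpa only [adjoint_comp, adjoint_adjoint, hP.adjoint_eq,
    ((IsSelfAdjoint.one _).sub hP).adjoint_eq, comp_apply] using h₂.adjoint_apply f n

theorem adjoint_fst_apply (hP : IsSelfAdjoint P)
    (h₁ : HasLinearSymbol V₁ ((1 - P) ∘L U) (P ∘L U)) (f : ℓ²(ℕ, F)) (n : ℕ) :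
    (adjoint V₁ f : ℕ → F) n
      = adjoint U ((1 - P) ((f : ℕ → F) n)) + adjoint U (P ((f : ℕ → F) (n + 1))) := by
  simpa only [adjoint_comp, adjoint_adjoint, hP.adjoint_eq,
    ((IsSelfAdjoint.one _).sub hP).adjoint_eq, comp_apply] using h₁.adjoint_apply f n

theorem commutator_adjoint_snd_fst_apply (hP : IsSelfAdjoint P)
    (h₁ : HasLinearSymbol V₁ ((1 - P) ∘L U) (P ∘L U))
    (h₂ : HasLinearSymbol V₂ (adjoint U ∘L P) (adjoint U ∘L (1 - P))) (f : ℓ²(ℕ, F)) :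
    ((adjoint V₂ ∘L V₁ - V₁ ∘L adjoint V₂) f : ℕ → F) 0 = P (U ((1 - P) (U ((f : ℕ → F) 0)))) ∧
      ∀ n, ((adjoint V₂ ∘L V₁ - V₁ ∘L adjoint V₂) f : ℕ → F) (n + 1) = 0 := by
  refine ⟨?_, fun n => ?_⟩ <;>
  · simp only [sub_apply, lp.coeFn_sub, Pi.sub_apply, comp_apply, adjoint_snd_apply hP h₂,
      h₁.apply_zero, h₁.apply_succ, map_add, map_sub]
    abel

theorem commutator_snd_adjoint_fst_apply (hP : IsSelfAdjoint P)
    (h₁ : HasLinearSymbol V₁ ((1 - P) ∘L U) (P ∘L U))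
    (h₂ : HasLinearSymbol V₂ (adjoint U ∘L P) (adjoint U ∘L (1 - P))) (f : ℓ²(ℕ, F)) :
    ((V₂ ∘L adjoint V₁ - adjoint V₁ ∘L V₂) f : ℕ → F) 0
        = -adjoint U ((1 - P) (adjoint U (P ((f : ℕ → F) 0)))) ∧
      ∀ n, ((V₂ ∘L adjoint V₁ - adjoint V₁ ∘L V₂) f : ℕ → F) (n + 1) = 0 := by
  refine ⟨?_, fun n => ?_⟩ <;>
  · simp only [sub_apply, lp.coeFn_sub, Pi.sub_apply, comp_apply, adjoint_fst_apply hP h₁,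
      h₂.apply_zero, h₂.apply_succ, map_add, map_sub]
    abel

theorem doublyCommute_iff (hP : IsSelfAdjoint P)
    (h₁ : HasLinearSymbol V₁ ((1 - P) ∘L U) (P ∘L U))
    (h₂ : HasLinearSymbol V₂ (adjoint U ∘L P) (adjoint U ∘L (1 - P))) :
    V₂ ∘L adjoint V₁ = adjoint V₁ ∘L V₂ ↔ adjoint U ∘L (1 - P) ∘L adjoint U ∘L P = 0 := by
  rw [← sub_eq_zero]
  constructor
  · intro h
    ext x
    have h₀ := (commutator_snd_adjoint_fst_apply hP h₁ h₂ (lp.single 2 0 x)).1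
    rw [h, zero_apply, lp.coeFn_zero, Pi.zero_apply, lp.single_apply_self, eq_comm,
      neg_eq_zero] at h₀
    simpa only [comp_apply, zero_apply] using h₀
  · intro h
    ext f (_ | n)
    · have hf : adjoint U ((1 - P) (adjoint U (P ((f : ℕ → F) 0)))) = 0 :=
        DFunLike.congr_fun h _
      simp only [(commutator_snd_adjoint_fst_apply hP h₁ h₂ f).1, hf, neg_zero, zero_apply,
        lp.coeFn_zero, Pi.zero_apply]
    · exact (commutator_snd_adjoint_fst_apply hP h₁ h₂ f).2 n

end BCL

end

theorem stmt_11 {F : Type*} [NormedAddCommGroup F] [InnerProductSpace ℂ F] [CompleteSpace F]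
    (P U : F →L[ℂ] F)
    (hP_sa : IsSelfAdjoint P)
    (hU₂ : U ∘L adjoint U = 1)
    (V₁ V₂ : lp (fun _ : ℕ => F) 2 →L[ℂ] lp (fun _ : ℕ => F) 2)
    -- V₁ = I ⊗ P^⊥U + M_z ⊗ PU :
    (hV₁0 : ∀ f, (V₁ f : ∀ _ : ℕ, F) 0 = (1 - P) (U ((f : ∀ _ : ℕ, F) 0)))
    (hV₁n : ∀ f, ∀ n : ℕ, (V₁ f : ∀ _ : ℕ, F) (n + 1)
      = (1 - P) (U ((f : ∀ _ : ℕ, F) (n + 1))) + P (U ((f : ∀ _ : ℕ, F) n)))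
    -- V₂ = I ⊗ U*P + M_z ⊗ U*P^⊥ :
    (hV₂0 : ∀ f, (V₂ f : ∀ _ : ℕ, F) 0 = adjoint U (P ((f : ∀ _ : ℕ, F) 0)))
    (hV₂n : ∀ f, ∀ n : ℕ, (V₂ f : ∀ _ : ℕ, F) (n + 1)
      = adjoint U (P ((f : ∀ _ : ℕ, F) (n + 1)))
        + adjoint U ((1 - P) ((f : ∀ _ : ℕ, F) n))) :
    -- V₂*V₁ − V₁V₂* = (I − M_z M_z*) ⊗ (P U P^⊥ U) :
    (∀ f, ((adjoint V₂ ∘L V₁ - V₁ ∘L adjoint V₂) f : ∀ _ : ℕ, F) 0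
        = P (U ((1 - P) (U ((f : ∀ _ : ℕ, F) 0)))) ∧
      ∀ n : ℕ, ((adjoint V₂ ∘L V₁ - V₁ ∘L adjoint V₂) f : ∀ _ : ℕ, F) (n + 1) = 0) ∧
    -- consequently (V₁, V₂) is doubly commutative iff P U P^⊥ = 0 :
    (V₂ ∘L adjoint V₁ = adjoint V₁ ∘L V₂ ↔ P ∘L U ∘L (1 - P) = 0) := by
  have h₁ : HasLinearSymbol V₁ ((1 - P) ∘L U) (P ∘L U) := ⟨hV₁0, hV₁n⟩
  have h₂ : HasLinearSymbol V₂ (adjoint U ∘L P) (adjoint U ∘L (1 - P)) := ⟨hV₂0, hV₂n⟩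
  refine ⟨BCL.commutator_adjoint_snd_fst_apply hP_sa h₁ h₂, ?_⟩
  rw [BCL.doublyCommute_iff hP_sa h₁ h₂, comp_eq_zero_iff_of_comp_adjoint_eq_one hU₂,
    comp_adjoint_comp_eq_zero_iff hP_sa ((IsSelfAdjoint.one _).sub hP_sa)]
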